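/- arXiv:2508.17000 — 7 statements merged into one kernel-verified Lean document; each statement's English description precedes it below -/
import Mathlib

section
/- For every policy π and every λ ∈ ℝ with 0 ≤ λ < 1, the λ soft Bellman operator B^π_λ, defined by (B^π_λ Q)(s,a) = ∑_{n ≥ 1} (1 − λ) λ^{n−1} ((B^π)^[n] Q)(s,a), is a contraction mapping in the sup norm with contraction modulus γ(1 − λ)/(1 − λγ): for all Q₁, Q₂ : S × A → ℝ, ‖B^π_λ Q₁ − B^π_λ Q₂‖∞ ≤ γ · ((1 − λ)/(1 − λγ)) · ‖Q₁ − Q₂‖∞. -/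
/-- The λ soft Bellman operator is a contraction in the sup norm with
contraction modulus `γ (1 - λ) / (1 - λ γ)`. -/
theorem lambda_soft_bellman_contraction
    {S A : Type*} [Fintype S] [Fintype A] [Nonempty S] [Nonempty A]
    (P : S → A → S → ℝ) (r : S → A → ℝ) (γ τ : ℝ)
    (hP0 : ∀ s a s', 0 ≤ P s a s') (hP1 : ∀ s a, ∑ s', P s a s' = 1)
    (hγ0 : 0 ≤ γ) (hγ1 : γ < 1) (hτ : 0 < τ)
    (pb : S → A → ℝ) (hpb0 : ∀ s a, 0 < pb s a) (hpb1 : ∀ s, ∑ a, pb s a = 1)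
    (pol : S → A → ℝ) (hpol0 : ∀ s a, 0 < pol s a) (hpol1 : ∀ s, ∑ a, pol s a = 1)
    (D : S → ℝ) (hD : ∀ s, D s = ∑ a, pol s a * Real.log (pol s a / pb s a))
    (B : (S × A → ℝ) → (S × A → ℝ))
    (hB : ∀ Q s a, B Q (s, a) =
      r s a + γ * ∑ s', P s a s' * ((∑ a', pol s' a' * Q (s', a')) - τ * D s'))
    (lam : ℝ) (hlam0 : 0 ≤ lam) (hlam1 : lam < 1)
    (Blam : (S × A → ℝ) → (S × A → ℝ))
    (hBlam : ∀ Q s a, Blam Q (s, a) = ∑' n : ℕ, (1 - lam) * lam ^ n * (B^[n + 1] Q) (s, a))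
    (Q₁ Q₂ : S × A → ℝ) :
    ‖Blam Q₁ - Blam Q₂‖ ≤ γ * ((1 - lam) / (1 - lam * γ)) * ‖Q₁ - Q₂‖ := by
  -- B is a γ-contraction
  have hstep : ∀ R₁ R₂ : S × A → ℝ, ‖B R₁ - B R₂‖ ≤ γ * ‖R₁ - R₂‖ := by
    intro R₁ R₂
    rw [pi_norm_le_iff_of_nonneg (by positivity)]
    rintro ⟨s, a⟩
    have hpt : ∀ s' a', |R₁ (s', a') - R₂ (s', a')| ≤ ‖R₁ - R₂‖ := by
      intro s' a'
      simpa [Real.norm_eq_abs] using norm_le_pi_norm (R₁ - R₂) (s', a')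
    have hin : ∀ s' : S,
        |(∑ a', pol s' a' * R₁ (s', a')) - ∑ a', pol s' a' * R₂ (s', a')| ≤ ‖R₁ - R₂‖ := by
      intro s'
      rw [← Finset.sum_sub_distrib]
      calc |∑ a', (pol s' a' * R₁ (s', a') - pol s' a' * R₂ (s', a'))|
          ≤ ∑ a', |pol s' a' * R₁ (s', a') - pol s' a' * R₂ (s', a')| :=
            Finset.abs_sum_le_sum_abs _ _
        _ = ∑ a', pol s' a' * |R₁ (s', a') - R₂ (s', a')| := by
            refine Finset.sum_congr rfl fun a' _ => ?_
            rw [← mul_sub, abs_mul, abs_of_pos (hpol0 s' a')]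
        _ ≤ ∑ a', pol s' a' * ‖R₁ - R₂‖ :=
            Finset.sum_le_sum fun a' _ =>
              mul_le_mul_of_nonneg_left (hpt s' a') (hpol0 s' a').le
        _ = ‖R₁ - R₂‖ := by rw [← Finset.sum_mul, hpol1 s', one_mul]
    have key : (B R₁ - B R₂) (s, a) =
        γ * ∑ s', P s a s' *
          ((∑ a', pol s' a' * R₁ (s', a')) - ∑ a', pol s' a' * R₂ (s', a')) := by
      simp only [Pi.sub_apply, hB]
      have e : ∑ s', P s a s' *
            ((∑ a', pol s' a' * R₁ (s', a')) - ∑ a', pol s' a' * R₂ (s', a')) =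
          (∑ s', P s a s' * ((∑ a', pol s' a' * R₁ (s', a')) - τ * D s')) -
            ∑ s', P s a s' * ((∑ a', pol s' a' * R₂ (s', a')) - τ * D s') := by
        rw [← Finset.sum_sub_distrib]
        exact Finset.sum_congr rfl fun s' _ => by ring
      rw [e]; ring
    rw [Real.norm_eq_abs, key, abs_mul, abs_of_nonneg hγ0]
    refine mul_le_mul_of_nonneg_left ?_ hγ0
    calc |∑ s', P s a s' * ((∑ a', pol s' a' * R₁ (s', a')) - ∑ a', pol s' a' * R₂ (s', a'))|
        ≤ ∑ s', |P s a s' * ((∑ a', pol s' a' * R₁ (s', a')) - ∑ a', pol s' a' * R₂ (s', a'))| :=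
          Finset.abs_sum_le_sum_abs _ _
      _ ≤ ∑ s', P s a s' * ‖R₁ - R₂‖ := by
          refine Finset.sum_le_sum fun s' _ => ?_
          rw [abs_mul, abs_of_nonneg (hP0 s a s')]
          exact mul_le_mul_of_nonneg_left (hin s') (hP0 s a s')
      _ = ‖R₁ - R₂‖ := by rw [← Finset.sum_mul, hP1 s a, one_mul]
  have h1lam : (0:ℝ) ≤ 1 - lam := by linarith
  set d := ‖Q₁ - Q₂‖ with hd
  have hd0 : 0 ≤ d := norm_nonneg _
  have hiter : ∀ n, ‖B^[n] Q₁ - B^[n] Q₂‖ ≤ γ ^ n * d := by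
    intro n
    induction n with
    | zero => simp [hd]
    | succ n ih =>
      rw [Function.iterate_succ_apply', Function.iterate_succ_apply']
      calc ‖B (B^[n] Q₁) - B (B^[n] Q₂)‖ ≤ γ * ‖B^[n] Q₁ - B^[n] Q₂‖ := hstep _ _
        _ ≤ γ * (γ ^ n * d) := mul_le_mul_of_nonneg_left ih hγ0
        _ = γ ^ (n + 1) * d := by ring
  -- boundedness of iterates
  have hbdd : ∀ Q : S × A → ℝ, ∀ n, ‖B^[n] Q‖ ≤ ‖Q‖ + ‖B 0‖ / (1 - γ) := by
    intro Q n
    have h1γ : 0 < 1 - γ := by linarith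
    induction n with
    | zero =>
      simp only [Function.iterate_zero, id]
      exact le_add_of_nonneg_right (div_nonneg (norm_nonneg _) h1γ.le)
    | succ n ih =>
      rw [Function.iterate_succ_apply']
      calc ‖B (B^[n] Q)‖ = ‖(B (B^[n] Q) - B 0) + B 0‖ := by ring_nf
        _ ≤ ‖B (B^[n] Q) - B 0‖ + ‖B 0‖ := norm_add_le _ _
        _ ≤ γ * ‖B^[n] Q - 0‖ + ‖B 0‖ := by linarith [hstep (B^[n] Q) 0]
        _ = γ * ‖B^[n] Q‖ + ‖B 0‖ := by rw [sub_zero]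
        _ ≤ γ * (‖Q‖ + ‖B 0‖ / (1 - γ)) + ‖B 0‖ :=
            by have := mul_le_mul_of_nonneg_left ih hγ0; linarith
        _ ≤ ‖Q‖ + ‖B 0‖ / (1 - γ) := by
            have h1 : γ * (‖B 0‖ / (1 - γ)) + ‖B 0‖ = ‖B 0‖ / (1 - γ) := by
              field_simp; ring
            nlinarith [norm_nonneg Q]
  have hlg0 : 0 ≤ lam * γ := mul_nonneg hlam0 hγ0
  have hlg1 : lam * γ < 1 :=
    lt_of_le_of_lt (mul_le_of_le_one_right hlam0 hγ1.le) hlam1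
  have hsum : ∀ Q : S × A → ℝ, ∀ s a,
      Summable fun n : ℕ => (1 - lam) * lam ^ n * (B^[n + 1] Q) (s, a) := by
    intro Q s a
    set K := ‖Q‖ + ‖B 0‖ / (1 - γ) with hK
    have hK0 : 0 ≤ K :=
      add_nonneg (norm_nonneg Q) (div_nonneg (norm_nonneg _) (by linarith))
    refine Summable.of_norm_bounded (g := fun n => (1 - lam) * lam ^ n * K) ?_ ?_
    · have h : Summable fun n : ℕ => ((1 - lam) * K) * lam ^ n :=
        (summable_geometric_of_lt_one hlam0 hlam1).mul_left _
      exact h.congr fun n => by ring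
    · intro n
      rw [Real.norm_eq_abs, abs_mul,
        abs_of_nonneg (mul_nonneg h1lam (pow_nonneg hlam0 n))]
      refine mul_le_mul_of_nonneg_left ?_ (mul_nonneg h1lam (pow_nonneg hlam0 n))
      calc |(B^[n + 1] Q) (s, a)| ≤ ‖B^[n + 1] Q‖ := by
            simpa [Real.norm_eq_abs] using norm_le_pi_norm (B^[n + 1] Q) (s, a)
        _ ≤ K := hbdd Q (n + 1)
  rw [pi_norm_le_iff_of_nonneg
    (mul_nonneg (mul_nonneg hγ0 (div_nonneg h1lam (by linarith))) hd0)]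
  rintro ⟨s, a⟩
  have hdiff : (Blam Q₁ - Blam Q₂) (s, a) =
      ∑' n : ℕ, (1 - lam) * lam ^ n * ((B^[n + 1] Q₁) (s, a) - (B^[n + 1] Q₂) (s, a)) := by
    simp only [Pi.sub_apply, hBlam]
    rw [← Summable.tsum_sub (hsum Q₁ s a) (hsum Q₂ s a)]
    exact tsum_congr fun n => by ring
  have hbound : ∀ n : ℕ,
      |(1 - lam) * lam ^ n * ((B^[n + 1] Q₁) (s, a) - (B^[n + 1] Q₂) (s, a))| ≤
        (1 - lam) * lam ^ n * (γ ^ (n + 1) * d) := by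
    intro n
    rw [abs_mul, abs_of_nonneg (mul_nonneg h1lam (pow_nonneg hlam0 n))]
    refine mul_le_mul_of_nonneg_left ?_ (mul_nonneg h1lam (pow_nonneg hlam0 n))
    calc |(B^[n + 1] Q₁) (s, a) - (B^[n + 1] Q₂) (s, a)| ≤ ‖B^[n + 1] Q₁ - B^[n + 1] Q₂‖ := by
          simpa [Real.norm_eq_abs] using norm_le_pi_norm (B^[n + 1] Q₁ - B^[n + 1] Q₂) (s, a)
      _ ≤ γ ^ (n + 1) * d := hiter (n + 1)
  have hsumgeo : Summable fun n : ℕ => (1 - lam) * lam ^ n * (γ ^ (n + 1) * d) := by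
    refine ((summable_geometric_of_lt_one hlg0 hlg1).mul_left ((1 - lam) * γ * d)).congr
      fun n => ?_
    rw [mul_pow]; ring
  have htsumgeo : ∑' n : ℕ, (1 - lam) * lam ^ n * (γ ^ (n + 1) * d) =
      γ * ((1 - lam) / (1 - lam * γ)) * d := by
    have : ∑' n : ℕ, (1 - lam) * lam ^ n * (γ ^ (n + 1) * d) =
        ∑' n : ℕ, ((1 - lam) * γ * d) * (lam * γ) ^ n := by
      refine tsum_congr fun n => ?_
      rw [mul_pow]; ring
    rw [this, tsum_mul_left, tsum_geometric_of_lt_one hlg0 hlg1]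
    field_simp
  rw [Real.norm_eq_abs, hdiff]
  calc |∑' n : ℕ, (1 - lam) * lam ^ n * ((B^[n + 1] Q₁) (s, a) - (B^[n + 1] Q₂) (s, a))|
      ≤ ∑' n : ℕ, |(1 - lam) * lam ^ n * ((B^[n + 1] Q₁) (s, a) - (B^[n + 1] Q₂) (s, a))| := by
        have h := norm_tsum_le_tsum_norm (f := fun n : ℕ =>
            (1 - lam) * lam ^ n * ((B^[n + 1] Q₁) (s, a) - (B^[n + 1] Q₂) (s, a)))
          (by simpa only [Real.norm_eq_abs] using
            hsumgeo.of_nonneg_of_le (fun n => abs_nonneg _) hbound)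
        simpa only [Real.norm_eq_abs] using h
    _ ≤ ∑' n : ℕ, (1 - lam) * lam ^ n * (γ ^ (n + 1) * d) :=
        Summable.tsum_le_tsum hbound (hsumgeo.of_nonneg_of_le (fun n => abs_nonneg _) hbound) hsumgeo
    _ = γ * ((1 - lam) / (1 - lam * γ)) * d := htsumgeo
end

section
/- For every distribution π : A → ℝ with π a > 0 for all a and ∑_a π a = 1, the KL-regularised expected action-value satisfies the identity ∑_a π a · Q a − τ · D(π‖p_b) = V_B − τ · D(π‖π_B). In words: the one-step KL-regularised objective equals the Boltzmann value minus τ times the KL divergence of π from the Boltzmann distribution. -/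
/-- The one-step KL-regularised objective equals the Boltzmann value minus `τ` times
the KL divergence from the Boltzmann distribution:
`∑_a π a Q a - τ D(π‖p_b) = V_B - τ D(π‖π_B)`. -/
theorem kl_regularised_objective_identity
    {A : Type*} [Fintype A] [Nonempty A]
    (τ : ℝ) (hτ : 0 < τ)
    (pb : A → ℝ) (hpb0 : ∀ a, 0 < pb a) (hpb1 : ∑ a, pb a = 1)
    (Q : A → ℝ)
    (VB : ℝ) (hVB : VB = τ * Real.log (∑ a, pb a * Real.exp (Q a / τ)))
    (polB : A → ℝ) (hpolB : ∀ a, polB a = pb a * Real.exp ((Q a - VB) / τ))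
    (pol : A → ℝ) (hpol0 : ∀ a, 0 < pol a) (hpol1 : ∑ a, pol a = 1) :
    ∑ a, pol a * Q a - τ * (∑ a, pol a * Real.log (pol a / pb a)) =
      VB - τ * (∑ a, pol a * Real.log (pol a / polB a)) := by
  have key : ∀ a, pol a * Real.log (pol a / polB a)
      = pol a * Real.log (pol a / pb a) - pol a * ((Q a - VB) / τ) := by
    intro a
    rw [hpolB, div_mul_eq_div_div,
      Real.log_div (div_pos (hpol0 a) (hpb0 a)).ne' (Real.exp_ne_zero _), Real.log_exp, mul_sub]
  simp only [key]
  rw [Finset.sum_sub_distrib]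
  have : ∑ a, pol a * ((Q a - VB) / τ) = (∑ a, pol a * Q a - VB) / τ := by
    rw [eq_div_iff hτ.ne', Finset.sum_mul, eq_sub_iff_add_eq]
    nth_rewrite 2 [show VB = ∑ a, pol a * VB by rw [← Finset.sum_mul, hpol1, one_mul]]
    rw [← Finset.sum_add_distrib]
    exact Finset.sum_congr rfl fun a _ => by field_simp; ring
  rw [this, mul_sub, mul_div_cancel₀ _ hτ.ne']
  ring
end

section
/- One-step improvement identity: for any two policies π and π_new, any Q : S × A → ℝ, and any state-action pair (s,a), (B^{π_new} Q)(s,a) − (B^π Q)(s,a) = γ · τ · ∑_{s'} P s a s' · ( D(π‖π_B[Q])(s') − D(π_new‖π_B[Q])(s') ), where D(μ‖π_B[Q])(s') = ∑_{a'} μ s' a' · log(μ s' a' / π_B[Q](a'|s')). -/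
/-- One-step improvement identity:
`(B^{π_new} Q)(s,a) - (B^π Q)(s,a)
  = γ τ ∑_{s'} P s a s' (D(π‖π_B[Q])(s') - D(π_new‖π_B[Q])(s'))`. -/
theorem one_step_improvement_identity
    {S A : Type*} [Fintype S] [Fintype A] [Nonempty S] [Nonempty A]
    (P : S → A → S → ℝ) (r : S → A → ℝ) (γ τ : ℝ)
    (hP0 : ∀ s a s', 0 ≤ P s a s') (hP1 : ∀ s a, ∑ s', P s a s' = 1)
    (hγ0 : 0 ≤ γ) (hγ1 : γ < 1) (hτ : 0 < τ)
    (pb : S → A → ℝ) (hpb0 : ∀ s a, 0 < pb s a) (hpb1 : ∀ s, ∑ a, pb s a = 1)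
    (B : (S → A → ℝ) → (S × A → ℝ) → (S × A → ℝ))
    (hB : ∀ (μ : S → A → ℝ) (Q : S × A → ℝ) (s : S) (a : A), B μ Q (s, a) =
      r s a + γ * ∑ s', P s a s' * ((∑ a', μ s' a' * Q (s', a')) -
        τ * ∑ a', μ s' a' * Real.log (μ s' a' / pb s' a')))
    (pol polNew : S → A → ℝ)
    (hpol0 : ∀ s a, 0 < pol s a) (hpol1 : ∀ s, ∑ a, pol s a = 1)
    (hpolNew0 : ∀ s a, 0 < polNew s a) (hpolNew1 : ∀ s, ∑ a, polNew s a = 1)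
    (Q : S × A → ℝ)
    (VB : S → ℝ)
    (hVB : ∀ s, VB s = τ * Real.log (∑ a, pb s a * Real.exp (Q (s, a) / τ)))
    (polB : S → A → ℝ)
    (hpolB : ∀ s a, polB s a = pb s a * Real.exp ((Q (s, a) - VB s) / τ))
    (s : S) (a : A) :
    B polNew Q (s, a) - B pol Q (s, a) =
      γ * τ * ∑ s', P s a s' *
        ((∑ a', pol s' a' * Real.log (pol s' a' / polB s' a')) -
          (∑ a', polNew s' a' * Real.log (polNew s' a' / polB s' a'))) := by
  -- key: for any positive policy μ, D(μ‖polB) = D(μ‖pb) - (∑ μ Q - VB)/τ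
  have hstate : ∀ (μ : S → A → ℝ), (∀ s a, 0 < μ s a) → (∀ s, ∑ a, μ s a = 1) →
      ∀ s' : S, ∑ a', μ s' a' * Real.log (μ s' a' / polB s' a') =
        (∑ a', μ s' a' * Real.log (μ s' a' / pb s' a')) -
          ((∑ a', μ s' a' * Q (s', a')) - VB s') / τ := by
    intro μ hμ0 hμ1 s'
    have hlog : ∀ a', μ s' a' * Real.log (μ s' a' / polB s' a') =
        μ s' a' * Real.log (μ s' a' / pb s' a') -
          μ s' a' * (Q (s', a') - VB s') / τ := by
      intro a'
      have hexp : Real.exp ((Q (s', a') - VB s') / τ) ≠ 0 := Real.exp_ne_zero _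
      have hpos : (0:ℝ) < μ s' a' / pb s' a' := div_pos (hμ0 s' a') (hpb0 s' a')
      rw [hpolB, div_mul_eq_div_div, Real.log_div (ne_of_gt hpos) hexp, Real.log_exp]
      ring
    rw [Finset.sum_congr rfl fun a' _ => hlog a', Finset.sum_sub_distrib]
    have h1 : ∑ a', μ s' a' * (Q (s', a') - VB s') / τ =
        ((∑ a', μ s' a' * Q (s', a')) - VB s') / τ := by
      rw [← Finset.sum_div]
      congr 1
      have : ∑ a', μ s' a' * (Q (s', a') - VB s') =
          (∑ a', μ s' a' * Q (s', a')) - (∑ a', μ s' a') * VB s' := by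
        rw [Finset.sum_mul, ← Finset.sum_sub_distrib]
        exact Finset.sum_congr rfl fun a' _ => by ring
      rw [this, hμ1 s', one_mul]
    rw [h1]
  rw [hB, hB]
  have hsum : (∑ s', P s a s' * ((∑ a', polNew s' a' * Q (s', a')) -
        τ * ∑ a', polNew s' a' * Real.log (polNew s' a' / pb s' a'))) -
      (∑ s', P s a s' * ((∑ a', pol s' a' * Q (s', a')) -
        τ * ∑ a', pol s' a' * Real.log (pol s' a' / pb s' a'))) =
      τ * ∑ s', P s a s' *
        ((∑ a', pol s' a' * Real.log (pol s' a' / polB s' a')) -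
          (∑ a', polNew s' a' * Real.log (polNew s' a' / polB s' a'))) := by
    rw [← Finset.sum_sub_distrib, Finset.mul_sum]
    refine Finset.sum_congr rfl fun s' _ => ?_
    rw [hstate pol hpol0 hpol1 s', hstate polNew hpolNew0 hpolNew1 s']
    field_simp
    ring
  linear_combination γ * hsum
end

section
/- KL-regularised policy improvement: let π and π_new be policies, let Q^π and Q^{π_new} be the fixed points of B^π and B^{π_new} respectively (i.e. B^π Q^π = Q^π and B^{π_new} Q^{π_new} = Q^{π_new}), and let π_B = π_B[Q^π] be the Boltzmann policy of Q^π. If for every state s', D(π_new‖π_B)(s') ≤ D(π‖π_B)(s'), then Q^{π_new}(s,a) ≥ Q^π(s,a) for every state-action pair (s,a). -/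
/-- KL-regularised policy improvement: if `D(π_new‖π_B[Q^π]) ≤ D(π‖π_B[Q^π])` at every
state, then `Q^{π_new} ≥ Q^π` pointwise. -/
theorem kl_regularised_policy_improvement
    {S A : Type*} [Fintype S] [Fintype A] [Nonempty S] [Nonempty A]
    (P : S → A → S → ℝ) (r : S → A → ℝ) (γ τ : ℝ)
    (hP0 : ∀ s a s', 0 ≤ P s a s') (hP1 : ∀ s a, ∑ s', P s a s' = 1)
    (hγ0 : 0 ≤ γ) (hγ1 : γ < 1) (hτ : 0 < τ)
    (pb : S → A → ℝ) (hpb0 : ∀ s a, 0 < pb s a) (hpb1 : ∀ s, ∑ a, pb s a = 1)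
    (B : (S → A → ℝ) → (S × A → ℝ) → (S × A → ℝ))
    (hB : ∀ (μ : S → A → ℝ) (Q : S × A → ℝ) (s : S) (a : A), B μ Q (s, a) =
      r s a + γ * ∑ s', P s a s' * ((∑ a', μ s' a' * Q (s', a')) -
        τ * ∑ a', μ s' a' * Real.log (μ s' a' / pb s' a')))
    (pol polNew : S → A → ℝ)
    (hpol0 : ∀ s a, 0 < pol s a) (hpol1 : ∀ s, ∑ a, pol s a = 1)
    (hpolNew0 : ∀ s a, 0 < polNew s a) (hpolNew1 : ∀ s, ∑ a, polNew s a = 1)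
    (Qpol QpolNew : S × A → ℝ)
    (hQpol : B pol Qpol = Qpol) (hQpolNew : B polNew QpolNew = QpolNew)
    (VB : S → ℝ)
    (hVB : ∀ s, VB s = τ * Real.log (∑ a, pb s a * Real.exp (Qpol (s, a) / τ)))
    (polB : S → A → ℝ)
    (hpolB : ∀ s a, polB s a = pb s a * Real.exp ((Qpol (s, a) - VB s) / τ))
    (himp : ∀ s', (∑ a', polNew s' a' * Real.log (polNew s' a' / polB s' a')) ≤
      (∑ a', pol s' a' * Real.log (pol s' a' / polB s' a'))) :
    ∀ s a, Qpol (s, a) ≤ QpolNew (s, a) := by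
  have hτ' : τ ≠ 0 := hτ.ne'
  -- key identity: ∑ μ Q − τ KL(μ‖pb) = VB − τ KL(μ‖polB)
  have key : ∀ (μ : S → A → ℝ), (∀ s a, 0 < μ s a) → (∀ s, ∑ a, μ s a = 1) → ∀ s',
      (∑ a', μ s' a' * Qpol (s', a')) -
        τ * ∑ a', μ s' a' * Real.log (μ s' a' / pb s' a')
      = VB s' - τ * ∑ a', μ s' a' * Real.log (μ s' a' / polB s' a') := by
    intro μ hμ0 hμ1 s'
    have hlog : ∀ a, Real.log (μ s' a / polB s' a)
        = Real.log (μ s' a / pb s' a) - (Qpol (s', a) - VB s') / τ := by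
      intro a
      rw [hpolB, div_mul_eq_div_div,
        Real.log_div (div_pos (hμ0 s' a) (hpb0 s' a)).ne' (Real.exp_ne_zero _),
        Real.log_exp]
    have hsum : ∑ a', μ s' a' * Real.log (μ s' a' / polB s' a')
        = (∑ a', μ s' a' * Real.log (μ s' a' / pb s' a'))
          - (∑ a', μ s' a' * Qpol (s', a')) / τ + (∑ a', μ s' a') * (VB s' / τ) := by
      have hterm : ∀ a, μ s' a * Real.log (μ s' a / polB s' a)
          = μ s' a * Real.log (μ s' a / pb s' a) - μ s' a * Qpol (s', a) / τ
            + μ s' a * (VB s' / τ) := fun a => by rw [hlog a]; ring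
      rw [Finset.sum_congr rfl fun a _ => hterm a, Finset.sum_add_distrib,
        Finset.sum_sub_distrib, ← Finset.sum_div, ← Finset.sum_mul]
    rw [hsum, hμ1]
    field_simp
    ring
  -- Qpol ≤ B polNew Qpol pointwise
  have hmono : ∀ s a, Qpol (s, a) ≤ B polNew Qpol (s, a) := by
    intro s a
    conv_lhs => rw [← hQpol]
    rw [hB pol, hB polNew]
    refine add_le_add_right (mul_le_mul_of_nonneg_left (Finset.sum_le_sum ?_) hγ0) _
    intro s' _
    refine mul_le_mul_of_nonneg_left ?_ (hP0 s a s')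
    rw [key pol hpol0 hpol1 s', key polNew hpolNew0 hpolNew1 s']
    exact sub_le_sub_left (mul_le_mul_of_nonneg_left (himp s') hτ.le) _
  -- maximum gap
  set M := Finset.univ.sup' (Finset.univ_nonempty (α := S × A))
      (fun p : S × A => Qpol p - QpolNew p) with hMdefn
  have hMdef : ∀ p : S × A, Qpol p - QpolNew p ≤ M := fun p => by
    rw [hMdefn]
    exact Finset.le_sup' (fun p : S × A => Qpol p - QpolNew p) (Finset.mem_univ p)
  have hstep : ∀ s a, Qpol (s, a) - QpolNew (s, a) ≤ γ * M := by
    intro s a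
    have h1 := hmono s a
    have h2 : QpolNew (s, a) = B polNew QpolNew (s, a) :=
      (congrFun hQpolNew (s, a)).symm
    have key2 : B polNew Qpol (s, a) - B polNew QpolNew (s, a) ≤ γ * M := by
      rw [hB polNew Qpol, hB polNew QpolNew]
      have hinner : ∀ s' ∈ Finset.univ,
          P s a s' * ((∑ a', polNew s' a' * Qpol (s', a')) -
            τ * ∑ a', polNew s' a' * Real.log (polNew s' a' / pb s' a'))
          - P s a s' * ((∑ a', polNew s' a' * QpolNew (s', a')) -
            τ * ∑ a', polNew s' a' * Real.log (polNew s' a' / pb s' a'))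
          ≤ P s a s' * M := by
        intro s' _
        have hq : (∑ a', polNew s' a' * Qpol (s', a'))
            - (∑ a', polNew s' a' * QpolNew (s', a')) ≤ M := by
          rw [← Finset.sum_sub_distrib]
          calc ∑ a', (polNew s' a' * Qpol (s', a') - polNew s' a' * QpolNew (s', a'))
              ≤ ∑ a', polNew s' a' * M := by
                refine Finset.sum_le_sum fun a' _ => ?_
                rw [← mul_sub]
                exact mul_le_mul_of_nonneg_left (hMdef (s', a')) (hpolNew0 s' a').le
            _ = M := by rw [← Finset.sum_mul, hpolNew1 s', one_mul]
        calc P s a s' * ((∑ a', polNew s' a' * Qpol (s', a')) -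
              τ * ∑ a', polNew s' a' * Real.log (polNew s' a' / pb s' a'))
            - P s a s' * ((∑ a', polNew s' a' * QpolNew (s', a')) -
              τ * ∑ a', polNew s' a' * Real.log (polNew s' a' / pb s' a'))
            = P s a s' * ((∑ a', polNew s' a' * Qpol (s', a'))
              - (∑ a', polNew s' a' * QpolNew (s', a'))) := by ring
          _ ≤ P s a s' * M := mul_le_mul_of_nonneg_left hq (hP0 s a s')
      have hsm := Finset.sum_le_sum hinner
      rw [Finset.sum_sub_distrib] at hsm
      have hPM : ∑ s', P s a s' * M = M := by
        rw [← Finset.sum_mul, hP1, one_mul]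
      rw [hPM] at hsm
      nlinarith [mul_le_mul_of_nonneg_left hsm hγ0]
    linarith
  have hM : M ≤ γ * M := by
    rw [hMdefn]
    exact Finset.sup'_le _ _ fun p _ => by obtain ⟨s, a⟩ := p; exact hstep s a
  have hM0 : M ≤ 0 := by nlinarith
  intro s a
  have := hMdef (s, a)
  linarith
end

section
/- Boltzmann policy updates perform policy improvement: let π be a policy, let Q^π be the fixed point of B^π, and let π_new be the policy defined by π_new s a = π_B[Q^π](a|s) (the Boltzmann policy of Q^π). If Q^{π_new} is the fixed point of B^{π_new}, then Q^{π_new}(s,a) ≥ Q^π(s,a) for every state-action pair (s,a). -/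
/-- Boltzmann policy updates perform policy improvement: if `π_new` is the Boltzmann
policy of `Q^π`, then `Q^{π_new} ≥ Q^π` pointwise. -/
theorem boltzmann_update_policy_improvement
    {S A : Type*} [Fintype S] [Fintype A] [Nonempty S] [Nonempty A]
    (P : S → A → S → ℝ) (r : S → A → ℝ) (γ τ : ℝ)
    (hP0 : ∀ s a s', 0 ≤ P s a s') (hP1 : ∀ s a, ∑ s', P s a s' = 1)
    (hγ0 : 0 ≤ γ) (hγ1 : γ < 1) (hτ : 0 < τ)
    (pb : S → A → ℝ) (hpb0 : ∀ s a, 0 < pb s a) (hpb1 : ∀ s, ∑ a, pb s a = 1)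
    (B : (S → A → ℝ) → (S × A → ℝ) → (S × A → ℝ))
    (hB : ∀ (μ : S → A → ℝ) (Q : S × A → ℝ) (s : S) (a : A), B μ Q (s, a) =
      r s a + γ * ∑ s', P s a s' * ((∑ a', μ s' a' * Q (s', a')) -
        τ * ∑ a', μ s' a' * Real.log (μ s' a' / pb s' a')))
    (pol : S → A → ℝ)
    (hpol0 : ∀ s a, 0 < pol s a) (hpol1 : ∀ s, ∑ a, pol s a = 1)
    (Qpol : S × A → ℝ) (hQpol : B pol Qpol = Qpol)
    (VB : S → ℝ)
    (hVB : ∀ s, VB s = τ * Real.log (∑ a, pb s a * Real.exp (Qpol (s, a) / τ)))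
    (polNew : S → A → ℝ)
    (hpolNew : ∀ s a, polNew s a = pb s a * Real.exp ((Qpol (s, a) - VB s) / τ))
    (QpolNew : S × A → ℝ) (hQpolNew : B polNew QpolNew = QpolNew) :
    ∀ s a, Qpol (s, a) ≤ QpolNew (s, a) := by
  set Z : S → ℝ := fun s => ∑ a, pb s a * Real.exp (Qpol (s, a) / τ) with hZ
  have hZpos : ∀ s, 0 < Z s := fun s =>
    Finset.sum_pos (fun a _ => mul_pos (hpb0 s a) (Real.exp_pos _)) Finset.univ_nonempty
  have hpolNew0 : ∀ s a, 0 < polNew s a := by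
    intro s a; rw [hpolNew]; exact mul_pos (hpb0 s a) (Real.exp_pos _)
  have hexpVB : ∀ s, Real.exp (VB s / τ) = Z s := by
    intro s
    rw [hVB, mul_comm, mul_div_assoc, div_self hτ.ne', mul_one, Real.exp_log (hZpos s)]
  have hpolNew1 : ∀ s, ∑ a, polNew s a = 1 := by
    intro s
    have h : ∀ a, polNew s a = pb s a * Real.exp (Qpol (s, a) / τ) / Z s := by
      intro a
      rw [hpolNew, sub_div, Real.exp_sub, hexpVB, mul_div_assoc]
    simp only [h]
    rw [← Finset.sum_div, div_self (hZpos s).ne']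
  -- log ratio of the new policy
  have hlogratio : ∀ s a, Real.log (polNew s a / pb s a) = (Qpol (s, a) - VB s) / τ := by
    intro s a
    rw [hpolNew, mul_comm, mul_div_assoc, div_self (hpb0 s a).ne', mul_one, Real.log_exp]
  -- Step C: the new policy achieves value exactly VB
  have hGnew : ∀ s, (∑ a, polNew s a * Qpol (s, a)) -
      τ * ∑ a, polNew s a * Real.log (polNew s a / pb s a) = VB s := by
    intro s
    have h : ∀ a, τ * (polNew s a * Real.log (polNew s a / pb s a)) =
        polNew s a * Qpol (s, a) - polNew s a * VB s := by
      intro a; rw [hlogratio]; field_simp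
    rw [Finset.mul_sum]
    simp only [h]
    rw [Finset.sum_sub_distrib, ← Finset.sum_mul, hpolNew1, one_mul]
    ring
  -- Step B: Gibbs variational inequality for pol
  have hGold : ∀ s, (∑ a, pol s a * Qpol (s, a)) -
      τ * ∑ a, pol s a * Real.log (pol s a / pb s a) ≤ VB s := by
    intro s
    have key : ∑ a, pol s a * Real.log (pb s a * Real.exp (Qpol (s, a) / τ) / pol s a) ≤
        Real.log (Z s) := by
      have hj := strictConcaveOn_log_Ioi.concaveOn.le_map_sum
        (t := Finset.univ) (w := fun a => pol s a)
        (p := fun a => pb s a * Real.exp (Qpol (s, a) / τ) / pol s a)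
        (fun a _ => (hpol0 s a).le) (hpol1 s)
        (fun a _ => Set.mem_Ioi.mpr (div_pos (mul_pos (hpb0 s a) (Real.exp_pos _)) (hpol0 s a)))
      simp only [smul_eq_mul] at hj
      have hsum : ∑ a, pol s a * (pb s a * Real.exp (Qpol (s, a) / τ) / pol s a) = Z s :=
        Finset.sum_congr rfl fun a _ => by rw [mul_div_cancel₀ _ (hpol0 s a).ne']
      rwa [hsum] at hj
    have hrw : ∀ a, pol s a * Real.log (pb s a * Real.exp (Qpol (s, a) / τ) / pol s a) =
        pol s a * Qpol (s, a) / τ - pol s a * Real.log (pol s a / pb s a) := by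
      intro a
      rw [div_eq_mul_inv, Real.log_mul (mul_pos (hpb0 s a) (Real.exp_pos _)).ne' (inv_pos.mpr (hpol0 s a)).ne',
        Real.log_mul (hpb0 s a).ne' (Real.exp_pos _).ne', Real.log_exp,
        Real.log_inv, Real.log_div (hpol0 s a).ne' (hpb0 s a).ne']
      ring
    simp only [hrw] at key
    rw [Finset.sum_sub_distrib, ← Finset.sum_div] at key
    have h2 := mul_le_mul_of_nonneg_left key hτ.le
    rw [mul_sub, mul_div_cancel₀ _ hτ.ne'] at h2
    calc (∑ a, pol s a * Qpol (s, a)) - τ * ∑ a, pol s a * Real.log (pol s a / pb s a)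
        ≤ τ * Real.log (Z s) := h2
      _ = VB s := (hVB s).symm
  -- Qpol ≤ B polNew Qpol pointwise
  have hstep : ∀ s a, Qpol (s, a) ≤ B polNew Qpol (s, a) := by
    intro s a
    conv_lhs => rw [← hQpol]
    rw [hB, hB]
    refine (add_le_add_iff_left _).mpr (mul_le_mul_of_nonneg_left (Finset.sum_le_sum fun s' _ => ?_) hγ0)
    refine mul_le_mul_of_nonneg_left ?_ (hP0 s a s')
    rw [hGnew s']
    exact hGold s'
  -- contraction/min argument
  obtain ⟨⟨s₀, a₀⟩, -, hmin⟩ := Finset.exists_min_image (Finset.univ : Finset (S × A))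
    (fun p => QpolNew p - Qpol p) Finset.univ_nonempty
  set m : ℝ := QpolNew (s₀, a₀) - Qpol (s₀, a₀) with hm
  have hminle : ∀ s a, m ≤ QpolNew (s, a) - Qpol (s, a) := fun s a =>
    hmin (s, a) (Finset.mem_univ _)
  have hrec : γ * m ≤ m := by
    have h1 : B polNew QpolNew (s₀, a₀) - B polNew Qpol (s₀, a₀) =
        γ * ∑ s', P s₀ a₀ s' * ∑ a', polNew s' a' * (QpolNew (s', a') - Qpol (s', a')) := by
      rw [hB, hB, add_sub_add_left_eq_sub, ← mul_sub, ← Finset.sum_sub_distrib]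
      congr 1
      refine Finset.sum_congr rfl fun s' _ => ?_
      rw [← mul_sub]
      congr 1
      have h3 : ∑ a', polNew s' a' * (QpolNew (s', a') - Qpol (s', a')) =
          (∑ a', polNew s' a' * QpolNew (s', a')) - ∑ a', polNew s' a' * Qpol (s', a') := by
        rw [← Finset.sum_sub_distrib]
        exact Finset.sum_congr rfl fun a' _ => by ring
      rw [h3]; ring
    have h2 : γ * m ≤ γ * ∑ s', P s₀ a₀ s' *
        ∑ a', polNew s' a' * (QpolNew (s', a') - Qpol (s', a')) := by
      have hinner : ∀ s', m ≤ ∑ a', polNew s' a' * (QpolNew (s', a') - Qpol (s', a')) := by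
        intro s'
        calc m = ∑ a', polNew s' a' * m := by rw [← Finset.sum_mul, hpolNew1, one_mul]
          _ ≤ _ := Finset.sum_le_sum fun a' _ =>
              mul_le_mul_of_nonneg_left (hminle s' a') (hpolNew0 s' a').le
      calc γ * m = γ * ∑ s', P s₀ a₀ s' * m := by rw [← Finset.sum_mul, hP1, one_mul]
        _ ≤ _ := by
            refine mul_le_mul_of_nonneg_left (Finset.sum_le_sum fun s' _ => ?_) hγ0
            exact mul_le_mul_of_nonneg_left (hinner s') (hP0 s₀ a₀ s')
    calc γ * m ≤ B polNew QpolNew (s₀, a₀) - B polNew Qpol (s₀, a₀) := by rw [h1]; exact h2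
      _ ≤ QpolNew (s₀, a₀) - Qpol (s₀, a₀) := by
          rw [hQpolNew]
          have := hstep s₀ a₀
          linarith
      _ = m := rfl
  have hm0 : 0 ≤ m := by nlinarith
  intro s a
  have := hminle s a
  linarith
end

section
/- Equivalence of the KLQ policy update and a KL-penalised policy-gradient objective: let β = τ·(1 − α)/α. There exists a constant c : ℝ such that for every π : A → ℝ with π a > 0 for all a and ∑_a π a = 1, ∑_a π a · T a − τ · D(π‖p_b) − β · D(π‖π_k) = −(τ/α) · D(π‖π_{k+1}) + c. In words: up to a positive affine transformation independent of π, the PPO-penalty-style objective with advantage estimates T, KL penalty to the reference distribution p_b, and KL penalty to the previous Boltzmann iterate π_k, equals the negative KL divergence to the next Boltzmann iterate π_{k+1}. -/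
/-- Equivalence of the KLQ policy update and a KL-penalised policy-gradient objective:
with `β = τ(1-α)/α`, there is a constant `c` such that for every positive distribution
`π` on `A`,
`∑_a π a T a - τ D(π‖p_b) - β D(π‖π_k) = -(τ/α) D(π‖π_{k+1}) + c`. -/
theorem klq_update_equiv_penalised_objective
    {A : Type*} [Fintype A] [Nonempty A]
    (τ α : ℝ) (hτ : 0 < τ) (hα0 : 0 < α) (hα1 : α ≤ 1)
    (pb : A → ℝ) (hpb0 : ∀ a, 0 < pb a) (hpb1 : ∑ a, pb a = 1)
    (Qk T : A → ℝ)
    (Qk1 : A → ℝ) (hQk1 : ∀ a, Qk1 a = α * T a + (1 - α) * Qk a)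
    (VBk : ℝ) (hVBk : VBk = τ * Real.log (∑ a, pb a * Real.exp (Qk a / τ)))
    (polk : A → ℝ) (hpolk : ∀ a, polk a = pb a * Real.exp ((Qk a - VBk) / τ))
    (VBk1 : ℝ) (hVBk1 : VBk1 = τ * Real.log (∑ a, pb a * Real.exp (Qk1 a / τ)))
    (polk1 : A → ℝ) (hpolk1 : ∀ a, polk1 a = pb a * Real.exp ((Qk1 a - VBk1) / τ))
    (β : ℝ) (hβ : β = τ * (1 - α) / α) :
    ∃ c : ℝ, ∀ pol : A → ℝ, (∀ a, 0 < pol a) → ∑ a, pol a = 1 →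
      ∑ a, pol a * T a - τ * (∑ a, pol a * Real.log (pol a / pb a)) -
          β * (∑ a, pol a * Real.log (pol a / polk a)) =
        -(τ / α) * (∑ a, pol a * Real.log (pol a / polk1 a)) + c := by
  refine ⟨VBk1 / α - (1 - α) / α * VBk, ?_⟩
  intro pol hpos hsum
  have hτ' := hτ.ne'
  have hα' := hα0.ne'
  have hk : ∀ a, pol a * Real.log (pol a / polk a)
      = pol a * Real.log (pol a / pb a) - pol a * ((Qk a - VBk) / τ) := by
    intro a
    rw [hpolk a, Real.log_div (hpos a).ne' (mul_pos (hpb0 a) (Real.exp_pos _)).ne', Real.log_mul (hpb0 a).ne'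
      (Real.exp_ne_zero _), Real.log_exp, Real.log_div (hpos a).ne' (hpb0 a).ne']
    ring
  have hk1 : ∀ a, pol a * Real.log (pol a / polk1 a)
      = pol a * Real.log (pol a / pb a) - pol a * ((Qk1 a - VBk1) / τ) := by
    intro a
    rw [hpolk1 a, Real.log_div (hpos a).ne' (mul_pos (hpb0 a) (Real.exp_pos _)).ne', Real.log_mul (hpb0 a).ne'
      (Real.exp_ne_zero _), Real.log_exp, Real.log_div (hpos a).ne' (hpb0 a).ne']
    ring
  simp only [hk, hk1, Finset.sum_sub_distrib]
  have e1 : ∑ a, pol a * ((Qk a - VBk) / τ) = (∑ a, pol a * Qk a) / τ - VBk / τ := by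
    have h : ∀ a, pol a * ((Qk a - VBk) / τ) = (pol a * Qk a) / τ - (pol a * VBk) / τ :=
      fun a => by ring
    simp only [h, Finset.sum_sub_distrib, ← Finset.sum_div, ← Finset.sum_mul, hsum, one_mul]
  have e2 : ∑ a, pol a * ((Qk1 a - VBk1) / τ)
      = α * (∑ a, pol a * T a) / τ + (1 - α) * (∑ a, pol a * Qk a) / τ - VBk1 / τ := by
    have h : ∀ a, pol a * ((Qk1 a - VBk1) / τ)
        = α * (pol a * T a) / τ + (1 - α) * (pol a * Qk a) / τ - (pol a * VBk1) / τ :=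
      fun a => by rw [hQk1 a]; ring
    simp only [h, Finset.sum_add_distrib, Finset.sum_sub_distrib, ← Finset.sum_div,
      ← Finset.mul_sum, ← Finset.sum_mul, hsum, one_mul]
  rw [e1, e2, hβ]
  field_simp
  ring
end

section
/- The next Boltzmann iterate maximises the KL-penalised policy-gradient objective: let β = τ·(1 − α)/α and define L(π) = ∑_a π a · T a − τ · D(π‖p_b) − β · D(π‖π_k). Then for every π : A → ℝ with π a > 0 for all a and ∑_a π a = 1, L(π) ≤ L(π_{k+1}), with equality if and only if π = π_{k+1}. That is, π_{k+1} = π_B[α·T + (1−α)·Q_k] is the unique positive maximiser of L. -/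
/-- Gibbs' inequality: KL divergence between positive finite distributions is
nonnegative, and zero iff the distributions coincide. -/
lemma gibbs_kl {A : Type*} [Fintype A] (μ ν : A → ℝ)
    (hμ : ∀ a, 0 < μ a) (hν : ∀ a, 0 < ν a)
    (hμ1 : ∑ a, μ a = 1) (hν1 : ∑ a, ν a = 1) :
    0 ≤ ∑ a, μ a * Real.log (μ a / ν a) ∧
      ((∑ a, μ a * Real.log (μ a / ν a)) = 0 ↔ μ = ν) := by
  have key : ∀ a, μ a * Real.log (ν a / μ a) ≤ ν a - μ a := by
    intro a
    have h1 : Real.log (ν a / μ a) ≤ ν a / μ a - 1 :=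
      Real.log_le_sub_one_of_pos (div_pos (hν a) (hμ a))
    have h2 : μ a * Real.log (ν a / μ a) ≤ μ a * (ν a / μ a - 1) :=
      mul_le_mul_of_nonneg_left h1 (hμ a).le
    have h3 : μ a * (ν a / μ a - 1) = ν a - μ a := by
      field_simp [(hμ a).ne']
    linarith
  have hflip : ∀ a, μ a * Real.log (μ a / ν a) = -(μ a * Real.log (ν a / μ a)) := by
    intro a
    rw [Real.log_div (hμ a).ne' (hν a).ne', Real.log_div (hν a).ne' (hμ a).ne']
    ring
  have hsum : ∑ a, μ a * Real.log (ν a / μ a) ≤ 0 := by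
    calc ∑ a, μ a * Real.log (ν a / μ a) ≤ ∑ a, (ν a - μ a) :=
          Finset.sum_le_sum (fun a _ => key a)
      _ = 0 := by rw [Finset.sum_sub_distrib, hμ1, hν1]; ring
  have hrw : ∑ a, μ a * Real.log (μ a / ν a) = -(∑ a, μ a * Real.log (ν a / μ a)) := by
    rw [← Finset.sum_neg_distrib]
    exact Finset.sum_congr rfl (fun a _ => hflip a)
  constructor
  · rw [hrw]; linarith
  · constructor
    · intro h0
      by_contra hne
      have : ∃ a, μ a ≠ ν a := by
        by_contra hc
        push_neg at hc
        exact hne (funext hc)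
      obtain ⟨a0, ha0⟩ := this
      have hstrict : μ a0 * Real.log (ν a0 / μ a0) < ν a0 - μ a0 := by
        have hne1 : ν a0 / μ a0 ≠ 1 := by
          intro h
          rw [div_eq_one_iff_eq (hμ a0).ne'] at h
          exact ha0 h.symm
        have h1 : Real.log (ν a0 / μ a0) < ν a0 / μ a0 - 1 :=
          Real.log_lt_sub_one_of_pos (div_pos (hν a0) (hμ a0)) hne1
        have h2 : μ a0 * Real.log (ν a0 / μ a0) < μ a0 * (ν a0 / μ a0 - 1) :=
          (mul_lt_mul_iff_right₀ (hμ a0)).mpr h1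
        have h3 : μ a0 * (ν a0 / μ a0 - 1) = ν a0 - μ a0 := by
          field_simp [(hμ a0).ne']
        linarith
      have hlt : ∑ a, μ a * Real.log (ν a / μ a) < ∑ a, (ν a - μ a) :=
        Finset.sum_lt_sum (fun a _ => key a) ⟨a0, Finset.mem_univ a0, hstrict⟩
      have : ∑ a, (ν a - μ a) = 0 := by rw [Finset.sum_sub_distrib, hμ1, hν1]; ring
      rw [hrw] at h0
      linarith
    · intro h
      subst h
      apply Finset.sum_eq_zero
      intro a _
      rw [div_self (hμ a).ne', Real.log_one, mul_zero]

/-- The next Boltzmann iterate `π_{k+1} = π_B[αT + (1-α)Q_k]` is the unique positive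
maximiser of the KL-penalised policy-gradient objective
`L(π) = ∑_a π a T a - τ D(π‖p_b) - β D(π‖π_k)` with `β = τ(1-α)/α`. -/
theorem next_boltzmann_iterate_maximises_penalised_objective
    {A : Type*} [Fintype A] [Nonempty A]
    (τ α : ℝ) (hτ : 0 < τ) (hα0 : 0 < α) (hα1 : α ≤ 1)
    (pb : A → ℝ) (hpb0 : ∀ a, 0 < pb a) (hpb1 : ∑ a, pb a = 1)
    (Qk T : A → ℝ)
    (Qk1 : A → ℝ) (hQk1 : ∀ a, Qk1 a = α * T a + (1 - α) * Qk a)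
    (VBk : ℝ) (hVBk : VBk = τ * Real.log (∑ a, pb a * Real.exp (Qk a / τ)))
    (polk : A → ℝ) (hpolk : ∀ a, polk a = pb a * Real.exp ((Qk a - VBk) / τ))
    (VBk1 : ℝ) (hVBk1 : VBk1 = τ * Real.log (∑ a, pb a * Real.exp (Qk1 a / τ)))
    (polk1 : A → ℝ) (hpolk1 : ∀ a, polk1 a = pb a * Real.exp ((Qk1 a - VBk1) / τ))
    (β : ℝ) (hβ : β = τ * (1 - α) / α)
    (L : (A → ℝ) → ℝ)
    (hL : ∀ pol, L pol =
      ∑ a, pol a * T a - τ * (∑ a, pol a * Real.log (pol a / pb a)) -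
        β * (∑ a, pol a * Real.log (pol a / polk a))) :
    ∀ pol : A → ℝ, (∀ a, 0 < pol a) → ∑ a, pol a = 1 →
      L pol ≤ L polk1 ∧ (L pol = L polk1 ↔ pol = polk1) := by
  have hτ' : τ ≠ 0 := hτ.ne'
  have hα' : α ≠ 0 := hα0.ne'
  -- positivity and normalisation of polk1
  have hpolk1pos : ∀ a, 0 < polk1 a := fun a => by
    rw [hpolk1]; exact mul_pos (hpb0 a) (Real.exp_pos _)
  have hS : 0 < ∑ a, pb a * Real.exp (Qk1 a / τ) :=
    Finset.sum_pos (fun a _ => mul_pos (hpb0 a) (Real.exp_pos _)) Finset.univ_nonempty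
  have hexpV : Real.exp (VBk1 / τ) = ∑ a, pb a * Real.exp (Qk1 a / τ) := by
    rw [hVBk1, mul_div_cancel_left₀ _ hτ', Real.exp_log hS]
  have hsum1 : ∑ a, polk1 a = 1 := by
    have heach : ∀ a, polk1 a =
        pb a * Real.exp (Qk1 a / τ) / (∑ b, pb b * Real.exp (Qk1 b / τ)) := by
      intro a
      rw [hpolk1, sub_div, Real.exp_sub, hexpV]
      ring
    rw [Finset.sum_congr rfl (fun a _ => heach a), ← Finset.sum_div, div_self hS.ne']
  -- the key identity: L p = VBk1/α - (β/τ)·VBk - (τ/α)·D(p‖polk1)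
  have ident : ∀ p : A → ℝ, (∀ a, 0 < p a) → ∑ a, p a = 1 →
      L p = VBk1 / α - (β / τ) * VBk - (τ / α) * ∑ a, p a * Real.log (p a / polk1 a) := by
    intro p hp hp1
    have hlogk : ∀ a, Real.log (polk a) = Real.log (pb a) + (Qk a - VBk) / τ := by
      intro a
      rw [hpolk, Real.log_mul (hpb0 a).ne' (Real.exp_pos _).ne', Real.log_exp]
    have hlogk1 : ∀ a, Real.log (polk1 a) = Real.log (pb a) + (Qk1 a - VBk1) / τ := by
      intro a
      rw [hpolk1, Real.log_mul (hpb0 a).ne' (Real.exp_pos _).ne', Real.log_exp]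
    have hpolkpos : ∀ a, 0 < polk a := fun a => by
      rw [hpolk]; exact mul_pos (hpb0 a) (Real.exp_pos _)
    have pointwise : ∀ a,
        p a * T a - τ * (p a * Real.log (p a / pb a)) - β * (p a * Real.log (p a / polk a))
          = p a * (VBk1 / α - (β / τ) * VBk) - (τ / α) * (p a * Real.log (p a / polk1 a)) := by
      intro a
      rw [Real.log_div (hp a).ne' (hpb0 a).ne',
          Real.log_div (hp a).ne' (hpolkpos a).ne',
          Real.log_div (hp a).ne' (hpolk1pos a).ne',
          hlogk, hlogk1, hQk1, hβ]
      field_simp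
      ring
    calc L p = ∑ a, (p a * T a - τ * (p a * Real.log (p a / pb a))
              - β * (p a * Real.log (p a / polk a))) := by
          rw [hL, Finset.mul_sum, Finset.mul_sum, ← Finset.sum_sub_distrib,
              ← Finset.sum_sub_distrib]
      _ = ∑ a, (p a * (VBk1 / α - (β / τ) * VBk)
              - (τ / α) * (p a * Real.log (p a / polk1 a))) :=
          Finset.sum_congr rfl (fun a _ => pointwise a)
      _ = (∑ a, p a) * (VBk1 / α - (β / τ) * VBk)
              - (τ / α) * ∑ a, p a * Real.log (p a / polk1 a) := by
          rw [Finset.sum_sub_distrib, ← Finset.sum_mul, ← Finset.mul_sum]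
      _ = VBk1 / α - (β / τ) * VBk - (τ / α) * ∑ a, p a * Real.log (p a / polk1 a) := by
          rw [hp1, one_mul]
  intro pol hpos hsum
  obtain ⟨hD0, hDiff⟩ := gibbs_kl pol polk1 hpos hpolk1pos hsum hsum1
  have hDself : ∑ a, polk1 a * Real.log (polk1 a / polk1 a) = 0 :=
    Finset.sum_eq_zero (fun a _ => by rw [div_self (hpolk1pos a).ne', Real.log_one, mul_zero])
  have hLpol := ident pol hpos hsum
  have hLpolk1 := ident polk1 hpolk1pos hsum1
  rw [hDself, mul_zero, sub_zero] at hLpolk1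
  have hτα : 0 < τ / α := div_pos hτ hα0
  constructor
  · rw [hLpol, hLpolk1]
    nlinarith [mul_nonneg hτα.le hD0]
  · constructor
    · intro h
      apply hDiff.mp
      rw [hLpol, hLpolk1] at h
      have : (τ / α) * ∑ a, pol a * Real.log (pol a / polk1 a) = 0 := by linarith
      exact (mul_eq_zero.mp this).resolve_left hτα.ne' 
    · intro h
      subst h
      rfl
end
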